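/- Let G be a bipartite graph and let M and N be two maximum matchings in G. Then a vertex is even (respectively odd, respectively unreachable) with respect to M if and only if it is even (respectively odd, respectively unreachable) with respect to N; that is, the partition 𝓔, 𝓞, 𝓤 is the same for all maximum matchings of G. -/

import Mathlib

/-!
For a maximum matching `M`, a vertex `v` is even iff some maximum matching leaves `v` unmatched,
a condition that does not mention `M`. Flipping an even alternating path that starts at an
unmatched vertex gives a matching of the same size that misses its other end. Conversely, if a
maximum matching `M'` misses `v`, follow the alternating path of `M ∆ M'` through `v`: it cannot
be `M'`-augmenting, so it ends at an `M`-unmatched vertex at even distance from `v`.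

In a bipartite graph the parity of an alternating path is that of the sides of its ends, so `v`
is odd iff it has an even neighbour; and it is unreachable iff it is neither even nor odd.
-/

open SimpleGraph

variable {V : Type*}

/-- `M` is a matching in the graph `G`: a set of edges of `G` no two of which
share a vertex. -/
def IsMatchingIn (G : SimpleGraph V) (M : Set (Sym2 V)) : Prop :=
  M ⊆ G.edgeSet ∧ ∀ e ∈ M, ∀ f ∈ M, e ≠ f → ∀ v : V, v ∈ e → v ∉ f

/-- A vertex `v` is matched (covered) by the matching `M`. -/
def IsMatchedBy (M : Set (Sym2 V)) (v : V) : Prop :=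
  ∃ e ∈ M, v ∈ e

/-- The list of edges of a path given as a list of vertices. -/
def pathEdges (p : List V) : List (Sym2 V) :=
  (p.zip p.tail).map fun q => s(q.1, q.2)

/-- `p` is an alternating path from `u` to `v` in `G` with respect to the matching `M`:
its consecutive vertices are adjacent in `G`, it repeats no vertex, and its edges
alternate between edges in `M` and edges not in `M`. -/
def IsAltPath (G : SimpleGraph V) (M : Set (Sym2 V)) (u v : V) (p : List V) : Prop :=
  p.Chain' G.Adj ∧ p.Nodup ∧
    (pathEdges p).Chain' (fun e f => (e ∈ M ↔ f ∉ M)) ∧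
    p.head? = some u ∧ p.getLast? = some v

/-- `v` is even with respect to `M`: there is an even-length alternating path from
an `M`-unmatched vertex to `v`. -/
def EvenVtx (G : SimpleGraph V) (M : Set (Sym2 V)) (v : V) : Prop :=
  ∃ u p, ¬ IsMatchedBy M u ∧ IsAltPath G M u v p ∧ Even (pathEdges p).length

/-- `v` is odd with respect to `M`: there is an odd-length alternating path from
an `M`-unmatched vertex to `v`. -/
def OddVtx (G : SimpleGraph V) (M : Set (Sym2 V)) (v : V) : Prop :=
  ∃ u p, ¬ IsMatchedBy M u ∧ IsAltPath G M u v p ∧ Odd (pathEdges p).length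

/-- `v` is unreachable with respect to `M`: there is no alternating path from any
`M`-unmatched vertex to `v`. -/
def UnreachableVtx (G : SimpleGraph V) (M : Set (Sym2 V)) (v : V) : Prop :=
  ¬ ∃ u p, ¬ IsMatchedBy M u ∧ IsAltPath G M u v p

/-- `M` is a maximum (cardinality) matching in `G`. -/
def IsMaxMatching (G : SimpleGraph V) (M : Set (Sym2 V)) : Prop :=
  IsMatchingIn G M ∧ ∀ N, IsMatchingIn G N → N.ncard ≤ M.ncard

/-- `G` is bipartite with the two sides given by `side`. -/
def IsBipartiteWith (G : SimpleGraph V) (side : V → Bool) : Prop :=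
  ∀ u v, G.Adj u v → side u ≠ side v

section PathEdges

@[simp] lemma pathEdges_nil : pathEdges ([] : List V) = [] := rfl

@[simp] lemma pathEdges_singleton (a : V) : pathEdges [a] = [] := rfl

@[simp] lemma pathEdges_cons_cons (a b : V) (l : List V) :
    pathEdges (a :: b :: l) = s(a, b) :: pathEdges (b :: l) := rfl

lemma length_pathEdges (p : List V) : (pathEdges p).length = p.length - 1 := by
  simp [pathEdges]

lemma mem_of_mem_pathEdges {p : List V} {e : Sym2 V} (he : e ∈ pathEdges p) {w : V}
    (hw : w ∈ e) : w ∈ p := by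
  induction p using List.twoStepInduction with
  | nil => simp at he
  | singleton => simp at he
  | cons_cons a b l _ ih =>
    rcases List.mem_cons.1 he with rfl | he
    · rcases Sym2.mem_iff.1 hw with rfl | rfl <;> simp
    · exact List.mem_cons_of_mem _ (ih b he)

lemma pathEdges_append {l₁ : List V} {a : V} (h : l₁.getLast? = some a) (l₂ : List V) :
    pathEdges (l₁ ++ l₂) = pathEdges l₁ ++ pathEdges (a :: l₂) := by
  induction l₁ using List.twoStepInduction with
  | nil => simp at h
  | singleton b =>
    obtain rfl : b = a := by simpa using h
    rfl
  | cons_cons b c l _ ih =>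
    rw [List.getLast?_cons_cons] at h
    rw [List.cons_append, List.cons_append, pathEdges_cons_cons, ← List.cons_append, ih c h]
    rfl

lemma pathEdges_concat {l : List V} {a : V} (h : l.getLast? = some a) (v : V) :
    pathEdges (l ++ [v]) = pathEdges l ++ [s(a, v)] := by
  simp [pathEdges_append h]

lemma eq_of_mem_pathEdges_of_head_mem {x b : V} {l : List V} (hp : (x :: b :: l).Nodup)
    {e : Sym2 V} (he : e ∈ pathEdges (x :: b :: l)) (hx : x ∈ e) : e = s(x, b) := by
  rcases List.mem_cons.1 he with rfl | he
  · rfl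
  · exact absurd (mem_of_mem_pathEdges he hx) (List.nodup_cons.1 hp).1

lemma getLast_mem_of_getLast?_pathEdges {p : List V} {v : V} (hv : p.getLast? = some v)
    {e : Sym2 V} (he : (pathEdges p).getLast? = some e) : v ∈ e := by
  obtain ⟨l, rfl⟩ := List.getLast?_eq_some_iff.1 hv
  rcases l.eq_nil_or_concat' with rfl | ⟨l, a, rfl⟩
  · simp at he
  · rw [pathEdges_concat List.getLast?_concat, List.getLast?_concat, Option.some.injEq] at he
    simp [← he]

lemma List.Nodup.isChain_pathEdges {p : List V} (hp : p.Nodup) :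
    (pathEdges p).IsChain (fun e f => e ≠ f ∧ ∃ w ∈ e, w ∈ f) := by
  induction p using List.twoStepInduction with
  | nil => exact .nil
  | singleton => exact .nil
  | cons_cons a b l _ ih =>
    refine List.isChain_cons.2 ⟨?_, ih b hp.of_cons⟩
    rcases l with _ | ⟨c, l⟩
    · simp
    · have hab : a ≠ b := fun h => (List.nodup_cons.1 hp).1 (h ▸ List.mem_cons_self)
      have hac : a ≠ c := fun h => (List.nodup_cons.1 hp).1 (h ▸ by simp)
      simp [hab, hac]

end PathEdges

lemma List.IsChain.odd_length_iff {α : Type*} (P : α → Prop) {l : List α}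
    (hl : l.IsChain (fun x y => P x ↔ ¬ P y)) {a b : α} (ha : l.head? = some a)
    (hb : l.getLast? = some b) : Odd l.length ↔ (P a ↔ P b) := by
  induction l generalizing a with
  | nil => simp at ha
  | cons c l ih =>
    simp only [List.head?_cons, Option.some.injEq] at ha
    subst ha
    cases l with
    | nil =>
      simp only [List.getLast?_singleton, Option.some.injEq] at hb
      simp [hb]
    | cons d l =>
      rw [List.isChain_cons_cons] at hl
      rw [List.getLast?_cons_cons] at hb
      rw [List.length_cons, Nat.odd_add_one, ih hl.2 rfl hb, hl.1]
      tauto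

section Matching

variable {G : SimpleGraph V} {M N : Set (Sym2 V)}

lemma IsMatchingIn.eq_of_mem (hM : IsMatchingIn G M) {e f : Sym2 V} (he : e ∈ M) (hf : f ∈ M)
    {w : V} (hwe : w ∈ e) (hwf : w ∈ f) : e = f :=
  of_not_not fun hne => hM.2 e he f hf hne w hwe hwf

lemma IsMatchingIn.mono (hM : IsMatchingIn G M) (hNM : N ⊆ M) : IsMatchingIn G N :=
  ⟨hNM.trans hM.1, fun e he f hf => hM.2 e (hNM he) f (hNM hf)⟩

lemma IsMatchingIn.insert_of_adj (hM : IsMatchingIn G M) {a b : V} (hab : G.Adj a b)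
    (ha : ¬ IsMatchedBy M a) (hb : ¬ IsMatchedBy M b) : IsMatchingIn G (insert s(a, b) M) := by
  have hfree : ∀ f ∈ M, ∀ w ∈ s(a, b), w ∉ f := by
    rintro f hf w hw hwf
    rcases Sym2.mem_iff.1 hw with rfl | rfl
    exacts [ha ⟨f, hf, hwf⟩, hb ⟨f, hf, hwf⟩]
  refine ⟨Set.insert_subset hab hM.1, ?_⟩
  rintro e (rfl | he) f (rfl | hf) hne w hwe hwf
  · exact hne rfl
  · exact hfree f hf w hwe hwf
  · exact hfree e he w hwf hwe
  · exact hM.2 e he f hf hne w hwe hwf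

lemma IsMatchedBy.mono {v : V} (hv : IsMatchedBy N v) (hNM : N ⊆ M) : IsMatchedBy M v :=
  let ⟨e, he, hve⟩ := hv
  ⟨e, hNM he, hve⟩

lemma IsMatchedBy.exists_mem {v : V} (hv : IsMatchedBy M v) : ∃ w, s(v, w) ∈ M := by
  obtain ⟨e, he, hve⟩ := hv
  obtain ⟨w, rfl⟩ := Sym2.mem_iff_exists.1 hve
  exact ⟨w, he⟩

lemma isMatchedBy_insert {e : Sym2 V} {v : V} :
    IsMatchedBy (insert e M) v ↔ v ∈ e ∨ IsMatchedBy M v := by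
  simp [IsMatchedBy]

lemma IsMatchingIn.not_isMatchedBy_diff (hM : IsMatchingIn G M) {e : Sym2 V} (he : e ∈ M)
    {v : V} (hv : v ∈ e) : ¬ IsMatchedBy (M \ {e}) v :=
  fun ⟨_, hf, hvf⟩ => hf.2 (hM.eq_of_mem hf.1 he hvf hv)

end Matching

section AltPath

variable {G : SimpleGraph V} {M N : Set (Sym2 V)} {u v : V} {p : List V}

lemma isAltPath_iff : IsAltPath G M u v p ↔ p.IsChain G.Adj ∧ p.Nodup ∧
    (pathEdges p).IsChain (fun e f => (e ∈ M ↔ f ∉ M)) ∧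
    p.head? = some u ∧ p.getLast? = some v :=
  Iff.rfl

lemma IsAltPath.of_mem_iff (hp : IsAltPath G M u v p)
    (hMN : ∀ e ∈ pathEdges p, e ∈ M ↔ e ∈ N) : IsAltPath G N u v p := by
  obtain ⟨hadj, hnd, halt, hu, hv⟩ := isAltPath_iff.1 hp
  refine isAltPath_iff.2 ⟨hadj, hnd, halt.imp_of_mem_imp ?_, hu, hv⟩
  intro e f he hf
  rw [hMN e he, hMN f hf]
  exact id

lemma IsAltPath.prefix {w : V} {l₁ l₂ : List V} (hp : IsAltPath G M u w (l₁ ++ l₂))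
    (hv : l₁.getLast? = some v) : IsAltPath G M u v l₁ := by
  obtain ⟨hadj, hnd, halt, hu, -⟩ := isAltPath_iff.1 hp
  have hne : l₁ ≠ [] := by rintro rfl; simp at hv
  rw [pathEdges_append hv] at halt
  exact isAltPath_iff.2 ⟨hadj.left_of_append, (List.nodup_append.1 hnd).1, halt.left_of_append,
    by rwa [List.head?_append_of_ne_nil _ hne] at hu, hv⟩

lemma IsAltPath.concat {x : V} (hp : IsAltPath G M u x p) (hxv : G.Adj x v) (hvp : v ∉ p)
    (halt : ∀ e ∈ (pathEdges p).getLast?, e ∈ M ↔ s(x, v) ∉ M) :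
    IsAltPath G M u v (p ++ [v]) := by
  obtain ⟨hadj, hnd, hpalt, hu, hx⟩ := isAltPath_iff.1 hp
  have hne : p ≠ [] := by rintro rfl; simp at hu
  refine isAltPath_iff.2 ⟨hadj.append (.singleton v) ?_, ?_, ?_, ?_, List.getLast?_concat⟩
  · simpa [hx] using hxv
  · exact List.nodup_append.2 ⟨hnd, List.nodup_singleton v, by
      simp only [List.mem_singleton]
      rintro a ha _ rfl rfl
      exact hvp ha⟩
  · rw [pathEdges_concat hx]
    exact hpalt.append (.singleton _) (by simpa using halt)
  · rwa [List.head?_append_of_ne_nil _ hne]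

lemma IsAltPath.even_length_iff (hu : ¬ IsMatchedBy M u) (hp : IsAltPath G M u v p) :
    Even (pathEdges p).length ↔ ∀ e ∈ (pathEdges p).getLast?, e ∈ M := by
  obtain ⟨-, -, halt, hhead, -⟩ := isAltPath_iff.1 hp
  obtain ⟨l, rfl⟩ := List.head?_eq_some_iff.1 hhead
  rcases l with _ | ⟨b, l⟩
  · simp
  obtain ⟨e, he⟩ : ∃ e, (pathEdges (u :: b :: l)).getLast? = some e :=
    Option.isSome_iff_exists.1 (List.getLast?_isSome.2 (List.cons_ne_nil _ _))
  have hub : s(u, b) ∉ M := fun h => hu ⟨_, h, Sym2.mem_mk_left u b⟩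
  rw [he, ← Nat.not_odd_iff_even, halt.odd_length_iff (· ∈ M) rfl he]
  simp [hub]

lemma IsAltPath.tail {a b : V} {l : List V} (hp : IsAltPath G M a v (a :: b :: l)) :
    IsAltPath G M b v (b :: l) := by
  obtain ⟨hadj, hnd, halt, -, hv⟩ := isAltPath_iff.1 hp
  exact isAltPath_iff.2 ⟨hadj.tail, hnd.of_cons, halt.tail, rfl,
    by rwa [List.getLast?_cons_cons] at hv⟩

lemma IsAltPath.exists_eq_concat (hp : IsAltPath G M u v p) (hlen : pathEdges p ≠ []) :
    ∃ q x, p = q ++ [v] ∧ IsAltPath G M u x q ∧ G.Adj x v ∧ v ∉ q ∧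
      (pathEdges p).length = (pathEdges q).length + 1 := by
  obtain ⟨hadj, hnd, -, -, hv⟩ := isAltPath_iff.1 hp
  obtain ⟨q, rfl⟩ := List.getLast?_eq_some_iff.1 hv
  obtain ⟨x, hx⟩ : ∃ x, q.getLast? = some x := by
    rcases q.eq_nil_or_concat' with rfl | ⟨l, x, rfl⟩
    · simp at hlen
    · exact ⟨x, List.getLast?_concat⟩
  refine ⟨q, x, rfl, hp.prefix hx, ?_, ?_, by simp [pathEdges_concat hx]⟩
  · simpa [hx] using (List.isChain_append.1 hadj).2.2
  · exact fun hvq => (List.nodup_append.1 hnd).2.2 v hvq v (List.mem_singleton_self v) rfl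
end AltPath

section Flip

variable [Finite V] {G : SimpleGraph V} {M : Set (Sym2 V)}

lemma IsMatchingIn.swap (hM : IsMatchingIn G M) {u x y : V} (hu : ¬ IsMatchedBy M u)
    (hux : G.Adj u x) (hxy : s(x, y) ∈ M) (hyu : y ≠ u) :
    IsMatchingIn G (insert s(u, x) (M \ {s(x, y)})) ∧
      (insert s(u, x) (M \ {s(x, y)})).ncard = M.ncard ∧
      ¬ IsMatchedBy (insert s(u, x) (M \ {s(x, y)})) y := by
  have hu' : ¬ IsMatchedBy (M \ {s(x, y)}) u := fun h => hu (h.mono Set.diff_subset)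
  have hx' := hM.not_isMatchedBy_diff hxy (Sym2.mem_mk_left x y)
  have hy' := hM.not_isMatchedBy_diff hxy (Sym2.mem_mk_right x y)
  refine ⟨(hM.mono Set.diff_subset).insert_of_adj hux hu' hx', ?_, ?_⟩
  · rw [Set.ncard_insert_of_notMem fun h => hu' ⟨_, h, Sym2.mem_mk_left u x⟩,
      Set.ncard_sdiff_singleton_add_one hxy]
  · have hyx : y ≠ x := by rintro rfl; exact G.irrefl (hM.1 hxy)
    simp [isMatchedBy_insert, hy', hyu, hyx]

theorem IsAltPath.exists_ncard_eq_of_even (hM : IsMatchingIn G M) {u v : V} {p : List V}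
    (hu : ¬ IsMatchedBy M u) (hp : IsAltPath G M u v p) (heven : Even (pathEdges p).length) :
    ∃ M', IsMatchingIn G M' ∧ M'.ncard = M.ncard ∧ ¬ IsMatchedBy M' v ∧
      ∀ w ∉ p, IsMatchedBy M' w → IsMatchedBy M w := by
  obtain ⟨l, rfl⟩ := List.head?_eq_some_iff.1 (isAltPath_iff.1 hp).2.2.2.1
  induction l using List.twoStepInduction generalizing M u with
  | nil =>
    obtain rfl : u = v := by simpa using (isAltPath_iff.1 hp).2.2.2.2
    exact ⟨M, hM, rfl, hu, fun _ _ => id⟩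
  | singleton x => simp at heven
  | cons_cons x y t ih _ =>
    obtain ⟨hadj, hnd, halt, -, -⟩ := isAltPath_iff.1 hp
    have hux : s(u, x) ∉ M := fun h => hu ⟨_, h, Sym2.mem_mk_left u x⟩
    have hxy : s(x, y) ∈ M := by
      simpa [hux] using (List.isChain_cons_cons.1 halt).1
    have hu_notin : u ∉ y :: t := fun h => (List.nodup_cons.1 hnd).1 (List.mem_cons_of_mem x h)
    have hx_notin : x ∉ y :: t := (List.nodup_cons.1 hnd.of_cons).1
    obtain ⟨hM₁, hcard, hy⟩ := hM.swap hu (List.isChain_cons_cons.1 hadj).1 hxy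
      (fun h => hu_notin (h ▸ List.mem_cons_self))
    have hmem : ∀ e ∈ pathEdges (y :: t), e ∈ insert s(u, x) (M \ {s(x, y)}) ↔ e ∈ M := by
      intro e he
      have hue : u ∉ e := fun h => hu_notin (mem_of_mem_pathEdges he h)
      have hxe : x ∉ e := fun h => hx_notin (mem_of_mem_pathEdges he h)
      have h₁ : e ≠ s(u, x) := by rintro rfl; simp at hue
      have h₂ : e ≠ s(x, y) := by rintro rfl; simp at hxe
      simp [h₁, h₂]
    have htail := (hp.tail.tail).of_mem_iff fun e he => (hmem e he).symm
    obtain ⟨M', hM', hcard', hv, hout⟩ :=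
      ih hM₁ hy htail (by simpa [Nat.even_add_one] using heven)
    refine ⟨M', hM', hcard'.trans hcard, hv, fun w hw hwM' => ?_⟩
    have hw₁ := hout w (fun h => hw (List.mem_cons_of_mem _ (List.mem_cons_of_mem _ h))) hwM'
    rcases isMatchedBy_insert.1 hw₁ with hwux | hwM
    · rcases Sym2.mem_iff.1 hwux with rfl | rfl <;> simp at hw
    · exact hwM.mono Set.diff_subset

theorem IsAltPath.exists_ncard_eq_add_one_of_odd (hM : IsMatchingIn G M) {u v : V}
    {p : List V} (hu : ¬ IsMatchedBy M u) (hv : ¬ IsMatchedBy M v) (hp : IsAltPath G M u v p)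
    (hodd : Odd (pathEdges p).length) : ∃ M', IsMatchingIn G M' ∧ M'.ncard = M.ncard + 1 := by
  obtain ⟨q, x, rfl, hq, hxv, hvq, hlen⟩ :=
    hp.exists_eq_concat fun h => by simp [h] at hodd
  obtain ⟨M', hM', hcard, hx, hout⟩ :=
    hq.exists_ncard_eq_of_even hM hu (by simpa [hlen, Nat.odd_add_one] using hodd)
  have hv' : ¬ IsMatchedBy M' v := fun h => hv (hout v hvq h)
  refine ⟨insert s(x, v) M', hM'.insert_of_adj hxv hx hv', ?_⟩
  rw [Set.ncard_insert_of_notMem fun h => hx ⟨_, h, Sym2.mem_mk_left x v⟩, hcard]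

end Flip

section SymmDiffPath

variable {G : SimpleGraph V} {M M' : Set (Sym2 V)} {v : V} {p : List V}

/-- A path in `M ∆ M'` ending at `v`, grown at its head. The closure condition
`mem_pathEdges` is what guarantees that the matching partner of the head is a new vertex. -/
structure IsSymmDiffPath (G : SimpleGraph V) (M M' : Set (Sym2 V)) (v : V) (p : List V) :
    Prop where
  isChain_adj : p.IsChain G.Adj
  nodup : p.Nodup
  getLast?_eq : p.getLast? = some v
  mem_symmDiff : ∀ e ∈ pathEdges p, e ∈ symmDiff M M'
  mem_pathEdges : ∀ z ∈ p, p.head? ≠ some z → ∀ e ∈ M ∪ M', z ∈ e → e ∈ pathEdges p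

lemma isSymmDiffPath_singleton : IsSymmDiffPath G M M' v [v] where
  isChain_adj := .singleton v
  nodup := List.nodup_singleton v
  getLast?_eq := rfl
  mem_symmDiff := by simp
  mem_pathEdges := by simp

lemma IsSymmDiffPath.symm (hp : IsSymmDiffPath G M M' v p) : IsSymmDiffPath G M' M v p where
  isChain_adj := hp.isChain_adj
  nodup := hp.nodup
  getLast?_eq := hp.getLast?_eq
  mem_symmDiff e he := symmDiff_comm M M' ▸ hp.mem_symmDiff e he
  mem_pathEdges z hz hne e he := hp.mem_pathEdges z hz hne e (Set.union_comm M' M ▸ he)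

lemma IsSymmDiffPath.isAltPath (hM : IsMatchingIn G M) (hM' : IsMatchingIn G M')
    (hp : IsSymmDiffPath G M M' v p) {x : V} (hx : p.head? = some x) :
    IsAltPath G M x v p := by
  refine isAltPath_iff.2 ⟨hp.isChain_adj, hp.nodup, ?_, hx, hp.getLast?_eq⟩
  refine hp.nodup.isChain_pathEdges.imp_of_mem_imp fun e f he hf ⟨hne, w, hwe, hwf⟩ => ?_
  have hM_one : ¬ (e ∈ M ∧ f ∈ M) := fun h => hne (hM.eq_of_mem h.1 h.2 hwe hwf)
  have hM'_one : ¬ (e ∈ M' ∧ f ∈ M') := fun h => hne (hM'.eq_of_mem h.1 h.2 hwe hwf)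
  have := Set.mem_symmDiff.1 (hp.mem_symmDiff e he)
  have := Set.mem_symmDiff.1 (hp.mem_symmDiff f hf)
  tauto

lemma IsSymmDiffPath.getLast_mem (hv : ¬ IsMatchedBy M' v) (hp : IsSymmDiffPath G M M' v p) :
    ∀ e ∈ (pathEdges p).getLast?, e ∈ M ∧ e ∉ M' := by
  intro e he
  have heM' : e ∉ M' := fun h => hv ⟨e, h, getLast_mem_of_getLast?_pathEdges hp.getLast?_eq he⟩
  have := Set.mem_symmDiff.1 (hp.mem_symmDiff e (List.mem_of_getLast? he))
  tauto

lemma IsSymmDiffPath.evenVtx (hM : IsMatchingIn G M) (hM' : IsMatchingIn G M')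
    (hv : ¬ IsMatchedBy M' v) (hp : IsSymmDiffPath G M M' v p) {x : V} (hx : p.head? = some x)
    (hxM : ¬ IsMatchedBy M x) : EvenVtx G M v :=
  have hpalt := hp.isAltPath hM hM' hx
  ⟨x, p, hxM, hpalt, (hpalt.even_length_iff hxM).2 fun e he => (hp.getLast_mem hv e he).1⟩

lemma IsSymmDiffPath.isMatchedBy_head [Finite V] (hM : IsMatchingIn G M)
    (hM' : IsMaxMatching G M') (hv : ¬ IsMatchedBy M' v) {x b : V} {l : List V}
    (hp : IsSymmDiffPath G M M' v (x :: b :: l)) : IsMatchedBy M' x := by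
  by_contra hx
  have hpalt := hp.symm.isAltPath hM'.1 hM rfl
  obtain ⟨e, he⟩ : ∃ e, (pathEdges (x :: b :: l)).getLast? = some e :=
    Option.isSome_iff_exists.1 (List.getLast?_isSome.2 (List.cons_ne_nil _ _))
  have hodd : Odd (pathEdges (x :: b :: l)).length := by
    rw [← Nat.not_even_iff_odd, hpalt.even_length_iff hx, he]
    simpa using (hp.getLast_mem hv e he).2
  obtain ⟨N, hN, hcard⟩ := hpalt.exists_ncard_eq_add_one_of_odd hM'.1 hx hv hodd
  have := hM'.2 N hN
  omega

lemma IsSymmDiffPath.cons {A B : Set (Sym2 V)} (hB : IsMatchingIn G B) {x y : V} {l : List V}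
    (hp : IsSymmDiffPath G A B v (x :: l)) (hxA : ∀ e ∈ A, x ∈ e → e ∈ pathEdges (x :: l))
    (hxB : ∀ e ∈ pathEdges (x :: l), x ∈ e → e ∉ B) (hxy : s(x, y) ∈ B) :
    IsSymmDiffPath G A B v (y :: x :: l) := by
  have hxy_path : s(x, y) ∉ pathEdges (x :: l) := fun h => hxB _ h (Sym2.mem_mk_left x y) hxy
  have hyx : y ≠ x := by rintro rfl; exact G.irrefl (hB.1 hxy)
  have hy : y ∉ x :: l := fun hy => hxy_path <|
    hp.mem_pathEdges y hy (by simpa using hyx.symm) _ (Or.inr hxy) (Sym2.mem_mk_right x y)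
  have hsub : pathEdges (x :: l) ⊆ pathEdges (y :: x :: l) := by simp
  refine ⟨List.isChain_cons_cons.2 ⟨G.adj_symm (hB.1 hxy), hp.isChain_adj⟩,
    List.nodup_cons.2 ⟨hy, hp.nodup⟩, by simpa using hp.getLast?_eq, ?_, ?_⟩
  · have hxyA : s(x, y) ∉ A := fun h => hxy_path (hxA _ h (Sym2.mem_mk_left x y))
    simpa [Sym2.eq_swap, Set.mem_symmDiff, hxy, hxyA] using hp.mem_symmDiff
  · intro z hz hzy e he hze
    have hz' : z ∈ x :: l := (List.mem_cons.1 hz).resolve_left (by simpa [eq_comm] using hzy)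
    by_cases hzx : z = x
    · subst hzx
      rcases he with heA | heB
      · exact hsub (hxA e heA hze)
      · rw [hB.eq_of_mem heB hxy hze (Sym2.mem_mk_left z y), Sym2.eq_swap]
        exact List.mem_cons_self
    · exact hsub (hp.mem_pathEdges z hz' (by simpa [eq_comm] using hzx) e he hze)

lemma IsSymmDiffPath.cons_cons {A B : Set (Sym2 V)} (hA : IsMatchingIn G A)
    (hB : IsMatchingIn G B) {x y b : V} {l : List V} (hp : IsSymmDiffPath G A B v (x :: b :: l))
    (hbA : s(x, b) ∈ A) (hbB : s(x, b) ∉ B) (hxy : s(x, y) ∈ B) :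
    IsSymmDiffPath G A B v (y :: x :: b :: l) :=
  hp.cons hB
    (fun _ he hxe => hA.eq_of_mem he hbA hxe (Sym2.mem_mk_left x b) ▸ List.mem_cons_self)
    (fun _ he hxe => eq_of_mem_pathEdges_of_head_mem hp.nodup he hxe ▸ hbB) hxy

lemma IsSymmDiffPath.evenVtx_or_exists_cons [Finite V] (hM : IsMatchingIn G M)
    (hM' : IsMaxMatching G M') (hv : ¬ IsMatchedBy M' v) (hp : IsSymmDiffPath G M M' v p) :
    EvenVtx G M v ∨ ∃ y, IsSymmDiffPath G M M' v (y :: p) := by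
  obtain ⟨x, l, rfl⟩ : ∃ x l, p = x :: l :=
    List.exists_cons_of_ne_nil fun h => by simpa [h] using hp.getLast?_eq
  rcases l with _ | ⟨b, l⟩
  · obtain rfl : x = v := by simpa using hp.getLast?_eq
    by_cases hxM : IsMatchedBy M x
    · obtain ⟨y, hy⟩ := hxM.exists_mem
      exact .inr ⟨y,
        (hp.symm.cons hM (fun e he hxe => absurd ⟨e, he, hxe⟩ hv) (by simp) hy).symm⟩
    · exact .inl (hp.evenVtx hM hM'.1 hv rfl hxM)
  rcases Set.mem_symmDiff.1 (hp.mem_symmDiff s(x, b) List.mem_cons_self) with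
    ⟨hbM, hbM'⟩ | ⟨hbM', hbM⟩
  · obtain ⟨y, hy⟩ := (hp.isMatchedBy_head hM hM' hv).exists_mem
    exact .inr ⟨y, hp.cons_cons hM hM'.1 hbM hbM' hy⟩
  · by_cases hxM : IsMatchedBy M x
    · obtain ⟨y, hy⟩ := hxM.exists_mem
      exact .inr ⟨y, (hp.symm.cons_cons hM'.1 hM hbM' hbM hy).symm⟩
    · exact .inl (hp.evenVtx hM hM'.1 hv rfl hxM)

end SymmDiffPath

section Even

variable {G : SimpleGraph V} {M M' : Set (Sym2 V)} {v : V}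

theorem evenVtx_of_not_isMatchedBy [Fintype V] (hM : IsMatchingIn G M)
    (hM' : IsMaxMatching G M') (hv : ¬ IsMatchedBy M' v) : EvenVtx G M v := by
  by_contra hne
  have hlong : ∀ n : ℕ, ∃ p, IsSymmDiffPath G M M' v p ∧ p.length = n + 1 := by
    intro n
    induction n with
    | zero => exact ⟨[v], isSymmDiffPath_singleton, rfl⟩
    | succ n ih =>
      obtain ⟨p, hp, hlen⟩ := ih
      obtain ⟨y, hyp⟩ := (hp.evenVtx_or_exists_cons hM hM' hv).resolve_left hne
      exact ⟨y :: p, hyp, by simp [hlen]⟩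
  obtain ⟨p, hp, hlen⟩ := hlong (Fintype.card V)
  have := hp.nodup.length_le_card
  omega

theorem EvenVtx.exists_isMaxMatching_not_isMatchedBy [Finite V] (hM : IsMaxMatching G M)
    (hv : EvenVtx G M v) : ∃ M', IsMaxMatching G M' ∧ ¬ IsMatchedBy M' v := by
  obtain ⟨u, p, hu, hp, heven⟩ := hv
  obtain ⟨M', hM', hcard, hv', -⟩ := hp.exists_ncard_eq_of_even hM.1 hu heven
  exact ⟨M', ⟨hM', fun N hN => hcard ▸ hM.2 N hN⟩, hv'⟩

theorem evenVtx_iff_exists_isMaxMatching [Fintype V] (hM : IsMaxMatching G M) :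
    EvenVtx G M v ↔ ∃ M', IsMaxMatching G M' ∧ ¬ IsMatchedBy M' v :=
  ⟨EvenVtx.exists_isMaxMatching_not_isMatchedBy hM,
    fun ⟨_, hM', hv⟩ => evenVtx_of_not_isMatchedBy hM.1 hM' hv⟩

end Even

section Odd

variable {G : SimpleGraph V} {M : Set (Sym2 V)} {u v x : V} {p : List V}

lemma IsBipartiteWith.even_length_pathEdges_iff {side : V → Bool}
    (hbip : IsBipartiteWith G side) (hp : p.IsChain G.Adj) (hu : p.head? = some u)
    (hv : p.getLast? = some v) : Even (pathEdges p).length ↔ side u = side v := by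
  have hchain : p.IsChain (fun a b => side a = true ↔ ¬ side b = true) :=
    hp.imp fun a b hab => by
      have := hbip a b hab
      revert this
      cases side a <;> cases side b <;> simp
  obtain ⟨l, rfl⟩ := List.head?_eq_some_iff.1 hu
  rw [length_pathEdges, List.length_cons, Nat.add_sub_cancel, ← Nat.not_odd_iff_even,
    ← Nat.odd_add_one, ← List.length_cons, hchain.odd_length_iff (side · = true) hu hv,
    Bool.coe_iff_coe]

lemma IsAltPath.mem_pathEdges_of_even (hM : IsMatchingIn G M) (hu : ¬ IsMatchedBy M u)
    (hp : IsAltPath G M u x p) (heven : Even (pathEdges p).length) {e : Sym2 V} (he : e ∈ M)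
    (hxe : x ∈ e) : e ∈ pathEdges p := by
  obtain ⟨-, -, -, hhead, hlast⟩ := isAltPath_iff.1 hp
  cases hf : (pathEdges p).getLast? with
  | none =>
    obtain ⟨l, rfl⟩ := List.head?_eq_some_iff.1 hhead
    rcases l with _ | ⟨b, l⟩
    · obtain rfl : u = x := by simpa using hlast
      exact absurd ⟨e, he, hxe⟩ hu
    · simp at hf
  | some f =>
    have hfM : f ∈ M := (hp.even_length_iff hu).1 heven f hf
    rw [hM.eq_of_mem he hfM hxe (getLast_mem_of_getLast?_pathEdges hlast hf)]
    exact List.mem_of_getLast? hf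

lemma OddVtx.exists_evenVtx_adj (hv : OddVtx G M v) : ∃ x, EvenVtx G M x ∧ G.Adj x v := by
  obtain ⟨u, p, hu, hp, hodd⟩ := hv
  obtain ⟨q, x, -, hq, hxv, -, hlen⟩ := hp.exists_eq_concat fun h => by simp [h] at hodd
  exact ⟨x, ⟨u, q, hu, hq, by simpa [hlen, Nat.odd_add_one] using hodd⟩, hxv⟩

lemma EvenVtx.oddVtx_of_adj {side : V → Bool} (hbip : IsBipartiteWith G side)
    (hM : IsMatchingIn G M) (hx : EvenVtx G M x) (hxv : G.Adj x v) : OddVtx G M v := by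
  obtain ⟨u, q, hu, hq, heven⟩ := hx
  obtain ⟨hadj, -, -, hhead, hlast⟩ := isAltPath_iff.1 hq
  have hside : side u ≠ side v :=
    (hbip.even_length_pathEdges_iff hadj hhead hlast).1 heven ▸ hbip x v hxv
  by_cases hvq : v ∈ q
  · obtain ⟨q₁, q₂, rfl⟩ := List.append_of_mem hvq
    have hq' : IsAltPath G M u v (q₁ ++ [v]) :=
      IsAltPath.prefix (l₂ := q₂) (by simpa using hq) List.getLast?_concat
    refine ⟨u, _, hu, hq', ?_⟩
    rw [← Nat.not_even_iff_odd, hbip.even_length_pathEdges_iff (isAltPath_iff.1 hq').1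
      (isAltPath_iff.1 hq').2.2.2.1 List.getLast?_concat]
    exact hside
  · have hxvM : s(x, v) ∉ M := fun h => hvq <| mem_of_mem_pathEdges
      (hq.mem_pathEdges_of_even hM hu heven h (Sym2.mem_mk_left x v)) (Sym2.mem_mk_right x v)
    have hq' := hq.concat hxv hvq fun e he => by
      simp [hxvM, (hq.even_length_iff hu).1 heven e he]
    refine ⟨u, _, hu, hq', ?_⟩
    rw [pathEdges_concat hlast, List.length_append]
    exact heven.add_one

theorem oddVtx_iff_exists_evenVtx_adj {side : V → Bool} (hbip : IsBipartiteWith G side)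
    (hM : IsMatchingIn G M) : OddVtx G M v ↔ ∃ x, EvenVtx G M x ∧ G.Adj x v :=
  ⟨OddVtx.exists_evenVtx_adj, fun ⟨_, hx, hxv⟩ => hx.oddVtx_of_adj hbip hM hxv⟩

end Odd

theorem unreachableVtx_iff {G : SimpleGraph V} {M : Set (Sym2 V)} {v : V} :
    UnreachableVtx G M v ↔ ¬ EvenVtx G M v ∧ ¬ OddVtx G M v := by
  simp only [UnreachableVtx, EvenVtx, OddVtx, not_exists, not_and]
  refine ⟨fun h => ⟨fun u p hu hp _ => h u p hu hp, fun u p hu hp _ => h u p hu hp⟩,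
    fun ⟨he, ho⟩ u p hu hp => ?_⟩
  exact (Nat.even_or_odd _).elim (he u p hu hp) (ho u p hu hp)

/-- The partition into even, odd and unreachable vertices is the same
for all maximum matchings of a bipartite graph. -/
theorem labels_same_for_all_max_matchings [Fintype V]
    (G : SimpleGraph V) (side : V → Bool) (hbip : IsBipartiteWith G side)
    (M N : Set (Sym2 V)) (hM : IsMaxMatching G M) (hN : IsMaxMatching G N) (v : V) :
    (EvenVtx G M v ↔ EvenVtx G N v) ∧
    (OddVtx G M v ↔ OddVtx G N v) ∧
    (UnreachableVtx G M v ↔ UnreachableVtx G N v) := by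
  have heven : ∀ w, EvenVtx G M w ↔ EvenVtx G N w := fun w => by
    rw [evenVtx_iff_exists_isMaxMatching hM, evenVtx_iff_exists_isMaxMatching hN]
  have hodd : OddVtx G M v ↔ OddVtx G N v := by
    simp only [oddVtx_iff_exists_evenVtx_adj hbip hM.1, oddVtx_iff_exists_evenVtx_adj hbip hN.1,
      heven]
  exact ⟨heven v, hodd, by rw [unreachableVtx_iff, unreachableVtx_iff, heven v, hodd]⟩
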